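/- arXiv:2010.10091 — 3 statements merged into one kernel-verified Lean document; each statement's English description precedes it below -/
import Mathlib

section
/- No exterior 3-form on K^4 is 3-regular. -/
open Function

section aux
variable {K : Type*} [Field K]

private def ee (i : Fin 4) : Fin 4 → K := Pi.single i 1

private lemma upd0 (X Y Z v : Fin 4 → K) : update ![X, Y, Z] 0 v = ![v, Y, Z] := by
  funext i; fin_cases i <;> simp

private lemma upd1 (X Y Z v : Fin 4 → K) : update ![X, Y, Z] 1 v = ![X, v, Z] := by
  funext i; fin_cases i <;> simp

private lemma upd2 (X Y Z v : Fin 4 → K) : update ![X, Y, Z] 2 v = ![X, Y, v] := by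
  funext i; fin_cases i <;> simp

variable (α : AlternatingMap K (Fin 4 → K) K (Fin 3))

private lemma hrep (v : Fin 4 → K) : v = ∑ i : Fin 4, v i • (ee i : Fin 4 → K) := by
  funext j
  simp [ee, Pi.single_apply, Finset.sum_apply]

private lemma expand (X Y Z : Fin 4 → K) :
    α ![X, Y, Z] =
      ∑ i : Fin 4, ∑ j : Fin 4, ∑ k : Fin 4,
        X i • (Y j • (Z k • α ![ee i, ee j, ee k])) := by
  conv_lhs => rw [← upd0 X Y Z X, hrep X]
  rw [α.map_update_sum]
  refine Finset.sum_congr rfl fun i _ => ?_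
  rw [α.map_update_smul, upd0]
  conv_lhs => rw [← upd1 (ee i) Y Z Y, hrep Y]
  rw [α.map_update_sum, Finset.smul_sum]
  refine Finset.sum_congr rfl fun j _ => ?_
  rw [α.map_update_smul, upd1]
  conv_lhs => rw [← upd2 (ee i) (ee j) Z Z, hrep Z]
  rw [α.map_update_sum, Finset.smul_sum, Finset.smul_sum]
  refine Finset.sum_congr rfl fun k _ => ?_
  rw [α.map_update_smul, upd2]

private lemma z01 (u w : Fin 4 → K) : α ![u, u, w] = 0 :=
  α.map_eq_zero_of_eq _ (i := 0) (j := 1) rfl (by decide)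

private lemma z02 (u w : Fin 4 → K) : α ![u, w, u] = 0 :=
  α.map_eq_zero_of_eq _ (i := 0) (j := 2) rfl (by decide)

private lemma z12 (u w : Fin 4 → K) : α ![w, u, u] = 0 :=
  α.map_eq_zero_of_eq _ (i := 1) (j := 2) rfl (by decide)

private lemma s01 (u v w : Fin 4 → K) : α ![v, u, w] = -α ![u, v, w] := by
  have h := α.map_swap (v := ![u, v, w]) (i := (0 : Fin 3)) (j := 1) (by decide)
  rw [show (![u, v, w] ∘ Equiv.swap (0:Fin 3) 1) = ![v, u, w] by
    funext x; fin_cases x <;> simp [Equiv.swap_apply_def]] at h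
  exact h

private lemma s02 (u v w : Fin 4 → K) : α ![w, v, u] = -α ![u, v, w] := by
  have h := α.map_swap (v := ![u, v, w]) (i := (0 : Fin 3)) (j := 2) (by decide)
  rw [show (![u, v, w] ∘ Equiv.swap (0:Fin 3) 2) = ![w, v, u] by
    funext x; fin_cases x <;> simp [Equiv.swap_apply_def]] at h
  exact h

private lemma s12 (u v w : Fin 4 → K) : α ![u, w, v] = -α ![u, v, w] := by
  have h := α.map_swap (v := ![u, v, w]) (i := (1 : Fin 3)) (j := 2) (by decide)
  rw [show (![u, v, w] ∘ Equiv.swap (1:Fin 3) 2) = ![u, w, v] by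
    funext x; fin_cases x <;> simp [Equiv.swap_apply_def]] at h
  exact h

private lemma r120 (u v w : Fin 4 → K) : α ![v, w, u] = α ![u, v, w] := by
  rw [s02 α u w v, s12 α u v w, neg_neg]

private lemma r201 (u v w : Fin 4 → K) : α ![w, u, v] = α ![u, v, w] := by
  rw [s01 α u w v, s12 α u v w, neg_neg]

end aux

/-- No exterior 3-form on `K^4` is 3-regular (preregular + the endomorphism condition). -/
theorem stmt_2 {K : Type*} [Field K]
    (α : AlternatingMap K (Fin 4 → K) K (Fin 3)) :
    ¬ ((∀ X : Fin 4 → K, (∀ Y Z : Fin 4 → K, α ![X, Y, Z] = 0) → X = 0) ∧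
       ∀ L₁ L₂ : (Fin 4 → K) →ₗ[K] (Fin 4 → K),
         (∀ X Y Z : Fin 4 → K, α ![L₁ X, Y, Z] = α ![X, L₂ Y, Z]) →
         ∃ c : K, L₁ = c • LinearMap.id ∧ L₂ = c • LinearMap.id) := by
  rintro ⟨h1, -⟩
  set A := α ![ee 0, ee 1, ee 2] with hA
  set B := α ![ee 0, ee 1, ee 3] with hB
  set C := α ![ee 0, ee 2, ee 3] with hC
  set D := α ![ee 1, ee 2, ee 3] with hD
  -- the 20 non-sorted injective values
  have e021 := s12 α (ee 0) (ee 1) (ee 2 : Fin 4 → K)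
  have e102 := s01 α (ee 0) (ee 1) (ee 2 : Fin 4 → K)
  have e210 := s02 α (ee 0) (ee 1) (ee 2 : Fin 4 → K)
  have e120 := r120 α (ee 0) (ee 1) (ee 2 : Fin 4 → K)
  have e201 := r201 α (ee 0) (ee 1) (ee 2 : Fin 4 → K)
  have e031 := s12 α (ee 0) (ee 1) (ee 3 : Fin 4 → K)
  have e103 := s01 α (ee 0) (ee 1) (ee 3 : Fin 4 → K)
  have e310 := s02 α (ee 0) (ee 1) (ee 3 : Fin 4 → K)
  have e130 := r120 α (ee 0) (ee 1) (ee 3 : Fin 4 → K)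
  have e301 := r201 α (ee 0) (ee 1) (ee 3 : Fin 4 → K)
  have e032 := s12 α (ee 0) (ee 2) (ee 3 : Fin 4 → K)
  have e203 := s01 α (ee 0) (ee 2) (ee 3 : Fin 4 → K)
  have e320 := s02 α (ee 0) (ee 2) (ee 3 : Fin 4 → K)
  have e230 := r120 α (ee 0) (ee 2) (ee 3 : Fin 4 → K)
  have e302 := r201 α (ee 0) (ee 2) (ee 3 : Fin 4 → K)
  have e132 := s12 α (ee 1) (ee 2) (ee 3 : Fin 4 → K)
  have e213 := s01 α (ee 1) (ee 2) (ee 3 : Fin 4 → K)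
  have e321 := s02 α (ee 1) (ee 2) (ee 3 : Fin 4 → K)
  have e231 := r120 α (ee 1) (ee 2) (ee 3 : Fin 4 → K)
  have e312 := r201 α (ee 1) (ee 2) (ee 3 : Fin 4 → K)
  set X : Fin 4 → K := ![D, -C, B, -A] with hXdef
  have hX0 : X 0 = D := rfl
  have hX1 : X 1 = -C := rfl
  have hX2 : X 2 = B := rfl
  have hX3 : X 3 = -A := rfl
  have hX : ∀ Y Z : Fin 4 → K, α ![X, Y, Z] = 0 := by
    intro Y Z
    rw [expand α X Y Z]
    simp only [Fin.sum_univ_four, z01, z02, z12,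
      e021, e102, e210, e120, e201, e031, e103, e310, e130, e301,
      e032, e203, e320, e230, e302, e132, e213, e321, e231, e312,
      hX0, hX1, hX2, hX3, ← hA, ← hB, ← hC, ← hD,
      smul_eq_mul, smul_zero, mul_zero, add_zero, zero_add, mul_neg, neg_mul, neg_neg]
    ring
  have hX' := h1 X hX
  have hDz : D = 0 := by simpa [hXdef] using congrFun hX' 0
  have hCz : C = 0 := by have := congrFun hX' 1; rw [hX1] at this; simpa using this
  have hBz : B = 0 := by simpa [hXdef] using congrFun hX' 2
  have hAz : A = 0 := by have := congrFun hX' 3; rw [hX3] at this; simpa using this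
  have c0 : (ee 0 : Fin 4 → K) 0 = 1 := rfl
  have c1 : (ee 0 : Fin 4 → K) 1 = 0 := rfl
  have c2 : (ee 0 : Fin 4 → K) 2 = 0 := rfl
  have c3 : (ee 0 : Fin 4 → K) 3 = 0 := rfl
  have he0 : ∀ Y Z : Fin 4 → K, α ![(ee 0 : Fin 4 → K), Y, Z] = 0 := by
    intro Y Z
    rw [expand α _ Y Z]
    simp only [Fin.sum_univ_four, z01, z02, z12,
      e021, e102, e210, e120, e201, e031, e103, e310, e130, e301,
      e032, e203, e320, e230, e302, e132, e213, e321, e231, e312,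
      c0, c1, c2, c3, ← hA, ← hB, ← hC, ← hD, hAz, hBz, hCz, hDz,
      smul_eq_mul, smul_zero, mul_zero, zero_mul, one_mul, add_zero, zero_add,
      mul_neg, neg_mul, neg_neg, neg_zero]
  have := congrFun (h1 (ee 0) he0) 0
  simp [ee, Pi.single_apply] at this
end

section
/- The exterior 3-form ω = θ^1∧θ^2∧θ^6 + θ^3∧θ^1∧θ^5 + θ^2∧θ^3∧θ^4 on K^6 is not 3-regular: there exist M, N ∈ End(K^6), not scalar multiples of the identity, with ω(M X, Y, Z) = ω(X, N Y, Z) for all X, Y, Z. -/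
/-!
Write `X = (a, b)` with `a, b ∈ K³`. Each monomial of `ω` contains exactly one coordinate of
`b`, and `ω` is the polarization of the determinant in that direction:
`ω(X, Y, Z) = det(b_X, a_Y, a_Z) + det(a_X, b_Y, a_Z) + det(a_X, a_Y, b_Z)`.
Hence the nilpotent map `P(a, b) = (0, a)` satisfies
`ω(PX, Y, Z) = det(a_X, a_Y, a_Z) = ω(X, PY, Z)`, and `P` is not a scalar.
-/

/-- The exterior 3-form `ω = θ¹∧θ²∧θ⁶ + θ³∧θ¹∧θ⁵ + θ²∧θ³∧θ⁴` on `K⁶`. -/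
def omegaE (K : Type*) [Field K] (X Y Z : Fin 6 → K) : K :=
  Matrix.det !![X 0, X 1, X 5; Y 0, Y 1, Y 5; Z 0, Z 1, Z 5] +
    Matrix.det !![X 2, X 0, X 4; Y 2, Y 0, Y 4; Z 2, Z 0, Z 4] +
    Matrix.det !![X 1, X 2, X 3; Y 1, Y 2, Y 3; Z 1, Z 2, Z 3]

namespace OmegaE

open Matrix

variable {K : Type*} [Field K]

def fstHalf (X : Fin 6 → K) : Fin 3 → K := ![X 0, X 1, X 2]

def sndHalf (X : Fin 6 → K) : Fin 3 → K := ![X 3, X 4, X 5]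

theorem omegaE_eq_polarization_det (X Y Z : Fin 6 → K) :
    omegaE K X Y Z =
      (of ![sndHalf X, fstHalf Y, fstHalf Z]).det +
        (of ![fstHalf X, sndHalf Y, fstHalf Z]).det +
        (of ![fstHalf X, fstHalf Y, sndHalf Z]).det := by
  simp only [omegaE, fstHalf, sndHalf, det_fin_three, of_apply, cons_val', cons_val_zero,
    cons_val_one, cons_val, cons_val_fin_one]
  ring

variable (K) in
/-- The map `(a, b) ↦ (0, a)`, given by its rows. -/
def shift : Matrix (Fin 6) (Fin 6) K :=
  of ![0, 0, 0, Pi.single 0 1, Pi.single 1 1, Pi.single 2 1]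

theorem fstHalf_shift_mulVec (X : Fin 6 → K) : fstHalf (shift K *ᵥ X) = 0 := by
  ext i
  fin_cases i <;> simp [fstHalf, shift, mulVec]

theorem sndHalf_shift_mulVec (X : Fin 6 → K) : sndHalf (shift K *ᵥ X) = fstHalf X := by
  ext i
  fin_cases i <;> simp [fstHalf, sndHalf, shift, mulVec]

theorem omegaE_shift_mulVec_left (X Y Z : Fin 6 → K) :
    omegaE K (shift K *ᵥ X) Y Z = (of ![fstHalf X, fstHalf Y, fstHalf Z]).det := by
  have h₀ (u v : Fin 3 → K) : (of ![0, u, v]).det = 0 :=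
    det_eq_zero_of_row_eq_zero 0 fun _ => rfl
  rw [omegaE_eq_polarization_det, fstHalf_shift_mulVec, sndHalf_shift_mulVec, h₀, h₀,
    add_zero, add_zero]

theorem omegaE_shift_mulVec_middle (X Y Z : Fin 6 → K) :
    omegaE K X (shift K *ᵥ Y) Z = (of ![fstHalf X, fstHalf Y, fstHalf Z]).det := by
  have h₁ (u v : Fin 3 → K) : (of ![u, 0, v]).det = 0 :=
    det_eq_zero_of_row_eq_zero 1 fun _ => rfl
  rw [omegaE_eq_polarization_det, fstHalf_shift_mulVec, sndHalf_shift_mulVec, h₁, h₁,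
    zero_add, add_zero]

theorem shift_ne_smul_one (c : K) : shift K ≠ c • (1 : Matrix (Fin 6) (Fin 6) K) := by
  intro h
  simpa [shift] using congrFun (congrFun h 3) 0

end OmegaE

/-- `ω` is not 3-regular: there are `M, N`, neither a scalar multiple of the identity,
with `ω(MX, Y, Z) = ω(X, NY, Z)` for all `X, Y, Z`. -/
theorem stmt_12 {K : Type*} [Field K] :
    ∃ M N : Matrix (Fin 6) (Fin 6) K,
      (∀ X Y Z : Fin 6 → K, omegaE K (M.mulVec X) Y Z = omegaE K X (N.mulVec Y) Z) ∧
      (∀ c : K, M ≠ c • (1 : Matrix (Fin 6) (Fin 6) K)) ∧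
      (∀ c : K, N ≠ c • (1 : Matrix (Fin 6) (Fin 6) K)) := by
  refine ⟨OmegaE.shift K, OmegaE.shift K, fun X Y Z => ?_, OmegaE.shift_ne_smul_one,
    OmegaE.shift_ne_smul_one⟩
  rw [OmegaE.omegaE_shift_mulVec_left, OmegaE.omegaE_shift_mulVec_middle]
end

section
/- In the quadratic algebra B = K⟨x^1,x^2,x^3,x^4⟩/([x^1,x^3]+[x^2,x^4], [x^4,x^3], [x^2,x^1]), the following matrix identity holds: the 3×4 matrix B(x) = [[-x^3,-x^4,x^1,x^2],[0,0,x^4,-x^3],[x^2,-x^1,0,0]] times the 4×3 matrix [[-x^1,0,2x^4],[-x^2,0,-2x^3],[x^3,2x^2,0],[x^4,-2x^1,0]] equals u·1_3 where u = 2(x^1 x^3 + x^2 x^4) = 2(x^3 x^1 + x^4 x^2). -/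
/-- The relations `[x¹,x³]+[x²,x⁴] = 0`, `[x⁴,x³] = 0`, `[x²,x¹] = 0` defining the quadratic
algebra `B` (generators `x¹,…,x⁴` are indexed by `0,…,3`). -/
inductive rel15 (K : Type*) [Field K] :
    FreeAlgebra K (Fin 4) → FreeAlgebra K (Fin 4) → Prop
  | r1 : rel15 K (FreeAlgebra.ι K 0 * FreeAlgebra.ι K 2 - FreeAlgebra.ι K 2 * FreeAlgebra.ι K 0
      + (FreeAlgebra.ι K 1 * FreeAlgebra.ι K 3 - FreeAlgebra.ι K 3 * FreeAlgebra.ι K 1)) 0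
  | r2 : rel15 K (FreeAlgebra.ι K 3 * FreeAlgebra.ι K 2 - FreeAlgebra.ι K 2 * FreeAlgebra.ι K 3) 0
  | r3 : rel15 K (FreeAlgebra.ι K 1 * FreeAlgebra.ι K 0 - FreeAlgebra.ι K 0 * FreeAlgebra.ι K 1) 0

/-- The generators of `B`. -/
noncomputable def xB (K : Type*) [Field K] (i : Fin 4) : RingQuot (rel15 K) :=
  RingQuot.mkAlgHom K (rel15 K) (FreeAlgebra.ι K i)

private lemma rq_neg_mul {K : Type*} [Field K] (a b : RingQuot (rel15 K)) :
    -a * b = -(a * b) := neg_mul a b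

private lemma rq_mul_neg {K : Type*} [Field K] (a b : RingQuot (rel15 K)) :
    a * -b = -(a * b) := mul_neg a b

private lemma rq_neg_neg {K : Type*} [Field K] (a : RingQuot (rel15 K)) :
    - -a = a := neg_neg a

/-- In `B = K⟨x¹,…,x⁴⟩/([x¹,x³]+[x²,x⁴], [x⁴,x³], [x²,x¹])` one has the matrix identity
`B(x) · C(x) = u · 1₃` with `u = 2(x¹x³ + x²x⁴) = 2(x³x¹ + x⁴x²)`. -/
theorem stmt_15 {K : Type*} [Field K] :
    (!![-(xB K 2), -(xB K 3), xB K 0, xB K 1;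
        0, 0, xB K 3, -(xB K 2);
        xB K 1, -(xB K 0), 0, 0] : Matrix (Fin 3) (Fin 4) (RingQuot (rel15 K))) *
      (!![-(xB K 0), 0, 2 * xB K 3;
          -(xB K 1), 0, -(2 * xB K 2);
          xB K 2, 2 * xB K 1, 0;
          xB K 3, -(2 * xB K 0), 0] : Matrix (Fin 4) (Fin 3) (RingQuot (rel15 K))) =
      (2 * (xB K 0 * xB K 2 + xB K 1 * xB K 3)) • (1 : Matrix (Fin 3) (Fin 3) (RingQuot (rel15 K)))
    ∧ 2 * (xB K 0 * xB K 2 + xB K 1 * xB K 3) = 2 * (xB K 2 * xB K 0 + xB K 3 * xB K 1) := by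
  have h1 : xB K 0 * xB K 2 + xB K 1 * xB K 3 = xB K 2 * xB K 0 + xB K 3 * xB K 1 := by
    have h := RingQuot.mkAlgHom_rel K (rel15.r1 (K := K))
    simp only [map_add, map_sub, map_mul, map_zero] at h
    simp only [xB]
    linear_combination (norm := noncomm_ring) h
  have h2 : xB K 3 * xB K 2 = xB K 2 * xB K 3 := by
    have h := RingQuot.mkAlgHom_rel K (rel15.r2 (K := K))
    simp only [map_add, map_sub, map_mul, map_zero] at h
    simp only [xB]
    linear_combination (norm := noncomm_ring) h
  have h3 : xB K 1 * xB K 0 = xB K 0 * xB K 1 := by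
    have h := RingQuot.mkAlgHom_rel K (rel15.r3 (K := K))
    simp only [map_add, map_sub, map_mul, map_zero] at h
    simp only [xB]
    linear_combination (norm := noncomm_ring) h
  constructor
  · ext i j
    fin_cases i <;> fin_cases j <;>
      simp [Matrix.mul_apply, Fin.sum_univ_succ, Matrix.one_apply, smul_eq_mul]
    all_goals try simp only [rq_neg_mul, rq_mul_neg, rq_neg_neg, two_mul, mul_add, add_mul]
    · linear_combination (norm := abel) -h1
    · linear_combination (norm := abel) -h3 - h3
    · linear_combination (norm := abel) h2 + h2
    · linear_combination (norm := abel) h2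
    · linear_combination (norm := abel) -h1 - h1
    · linear_combination (norm := abel) -h3
    · abel
  · rw [h1]
end
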